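/- Let p, q, r > 0, a² ≥ 0, and define F(x) = ∑_{j=0}^∞ g_j · I_{px/(r+px)}(p/2 + j, r/2) for x > 0, where g_j are the negative binomial weights with parameters q/(q+a²) and q/2 (and g_0 = 1, g_j = 0 for j ≥ 1 when a² = 0). Then F is nondecreasing on (0,∞) and F(x) → 1 as x → ∞. -/

import Mathlib

/-!
The weights `g j` are the negative binomial law with shape `q/2` and success probability
`q/(q+a²)` (the point mass at `0` when `a² = 0`): they are nonnegative and sum to `1` by the
binomial series `∑ C(c+j-1, j) tʲ = (1-t)^(-c)`. Each `I_z(a, b)` is the distribution function of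
a beta law, so it is nondecreasing and continuous in `z ∈ [0, 1]`, with values in `[0, 1]` and
`I_1 = 1`, while `z = px/(r+px)` increases to `1`. Hence `F` is a convex combination of
nondecreasing functions, and it tends to `1` by dominated convergence for series.
-/

noncomputable def regIncBeta (z a b : ℝ) : ℝ :=
  (Real.Gamma (a + b) / (Real.Gamma a * Real.Gamma b)) *
    ∫ t in (0:ℝ)..z, t ^ (a - 1) * (1 - t) ^ (b - 1)

open Real Set Filter Topology MeasureTheory ProbabilityTheory Polynomial

theorem Real.Gamma_add_nat_eq_ascPochhammer_mul {c : ℝ} (hc : ∀ k : ℕ, c ≠ -k) (n : ℕ) :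
    Gamma (c + n) = (ascPochhammer ℝ n).eval c * Gamma c := by
  induction n with
  | zero => simp
  | succ n ih =>
    have hcn : c + n ≠ 0 := fun h => hc n (eq_neg_of_add_eq_zero_left h)
    rw [Nat.cast_succ, ← add_assoc, Gamma_add_one hcn, ih, ascPochhammer_succ_eval]
    ring

theorem Ring.choose_add_nat_sub_one_eq_Gamma {c : ℝ} (hc : ∀ k : ℕ, c ≠ -k) (n : ℕ) :
    Ring.choose (c + n - 1) n = Gamma (c + n) / (Gamma (n + 1) * Gamma c) := by
  have hΓ : Gamma c ≠ 0 := Gamma_ne_zero hc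
  rw [← Ring.multichoose_eq, Real.Gamma_add_nat_eq_ascPochhammer_mul hc,
    Gamma_nat_eq_factorial, ← ascPochhammer_smeval_eq_eval,
    ← Ring.factorial_nsmul_multichoose_eq_ascPochhammer, nsmul_eq_mul]
  field_simp

theorem Real.hasSum_choose_add_sub_one_mul_pow (c : ℝ) {t : ℝ} (ht : |t| < 1) :
    HasSum (fun n : ℕ => Ring.choose (c + n - 1) n * t ^ n) (1 / (1 - t) ^ c) := by
  have := (one_div_one_sub_rpow_hasFPowerSeriesOnBall_zero c).hasSum (y := t)
    (by simpa [enorm_eq_nnnorm, ← NNReal.coe_lt_one] using ht)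
  simpa [FormalMultilinearSeries.ofScalars_apply_eq, mul_comm] using this

/-- The negative binomial law with real shape `c` and success probability `ρ`. -/
noncomputable def negBinomialWeight (c ρ : ℝ) (j : ℕ) : ℝ :=
  Gamma (c + j) / (Gamma (j + 1) * Gamma c) * ρ ^ c * (1 - ρ) ^ j

theorem negBinomialWeight_nonneg {c ρ : ℝ} (hc : 0 < c) (hρ0 : 0 ≤ ρ) (hρ1 : ρ ≤ 1) (j : ℕ) :
    0 ≤ negBinomialWeight c ρ j := by
  have := Gamma_pos_of_pos (show 0 < c + j by positivity)
  have := Gamma_pos_of_pos (show (0 : ℝ) < j + 1 by positivity)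
  have := Gamma_pos_of_pos hc
  have : 0 ≤ 1 - ρ := sub_nonneg.2 hρ1
  unfold negBinomialWeight
  positivity

theorem negBinomialWeight_one {c : ℝ} (hc : ∀ k : ℕ, c ≠ -k) (j : ℕ) :
    negBinomialWeight c 1 j = if j = 0 then 1 else 0 := by
  have hΓ : Gamma c ≠ 0 := Gamma_ne_zero hc
  rcases j with _ | j <;> simp [negBinomialWeight, hΓ]

theorem negBinomialWeight_div_add {c q a : ℝ} (hc : ∀ k : ℕ, c ≠ -k) (hq : q ≠ 0)
    (hqa : q + a ≠ 0) (j : ℕ) :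
    negBinomialWeight c (q / (q + a)) j =
      if a = 0 then (if j = 0 then 1 else 0) else
        Gamma (c + j) / (Gamma (j + 1) * Gamma c) * (q / (q + a)) ^ c * (a / (q + a)) ^ j := by
  by_cases ha : a = 0
  · rw [if_pos ha, ha, add_zero, div_self hq, negBinomialWeight_one hc]
  · rw [if_neg ha, negBinomialWeight, one_sub_div hqa, add_sub_cancel_left]

theorem hasSum_negBinomialWeight {c ρ : ℝ} (hc : ∀ k : ℕ, c ≠ -k) (hρ0 : 0 < ρ) (hρ2 : ρ < 2) :
    HasSum (negBinomialWeight c ρ) 1 := by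
  have h := (Real.hasSum_choose_add_sub_one_mul_pow c (t := 1 - ρ)
    (abs_lt.2 ⟨by linarith, by linarith⟩)).mul_left (ρ ^ c)
  rw [sub_sub_cancel, mul_one_div_cancel (rpow_pos_of_pos hρ0 c).ne'] at h
  refine h.congr_fun fun j => ?_
  rw [negBinomialWeight, Ring.choose_add_nat_sub_one_eq_Gamma hc]
  ring

theorem ofReal_betaIntegrand {a b t : ℝ} (ht0 : 0 ≤ t) (ht1 : t ≤ 1) :
    ((t ^ (a - 1) * (1 - t) ^ (b - 1) : ℝ) : ℂ) =
      (t : ℂ) ^ ((a : ℂ) - 1) * (1 - (t : ℂ)) ^ ((b : ℂ) - 1) := by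
  push_cast [Complex.ofReal_cpow ht0, Complex.ofReal_cpow (sub_nonneg.2 ht1)]
  rfl

theorem Complex.betaIntegral_ofReal (a b : ℝ) :
    betaIntegral a b = ↑(∫ t in (0:ℝ)..1, t ^ (a - 1) * (1 - t) ^ (b - 1)) := by
  rw [betaIntegral, ← intervalIntegral.integral_ofReal]
  refine intervalIntegral.integral_congr fun t ht => ?_
  rw [uIcc_of_le zero_le_one] at ht
  exact (ofReal_betaIntegrand ht.1 ht.2).symm

theorem intervalIntegrable_betaIntegrand {a b : ℝ} (ha : 0 < a) (hb : 0 < b) :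
    IntervalIntegrable (fun t : ℝ => t ^ (a - 1) * (1 - t) ^ (b - 1)) volume 0 1 := by
  refine (Complex.betaIntegral_convergent (u := a) (v := b) (by simpa) (by simpa)).norm.congr
    fun t ht => ?_
  rw [uIoc_of_le zero_le_one] at ht
  rw [← ofReal_betaIntegrand ht.1.le ht.2, Complex.norm_real, Real.norm_of_nonneg]
  exact mul_nonneg (rpow_nonneg ht.1.le _) (rpow_nonneg (sub_nonneg.2 ht.2) _)

theorem integral_betaIntegrand_eq_beta {a b : ℝ} (ha : 0 < a) (hb : 0 < b) :
    ∫ t in (0:ℝ)..1, t ^ (a - 1) * (1 - t) ^ (b - 1) = beta a b := by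
  rw [beta_eq_betaIntegralReal a b ha hb, Complex.betaIntegral_ofReal, Complex.ofReal_re]

theorem regIncBeta_eq_inv_beta_mul (z a b : ℝ) :
    regIncBeta z a b = (beta a b)⁻¹ * ∫ t in (0:ℝ)..z, t ^ (a - 1) * (1 - t) ^ (b - 1) := by
  rw [regIncBeta, beta, inv_div]

theorem regIncBeta_zero (a b : ℝ) : regIncBeta 0 a b = 0 := by
  simp [regIncBeta]

theorem regIncBeta_one {a b : ℝ} (ha : 0 < a) (hb : 0 < b) : regIncBeta 1 a b = 1 := by
  rw [regIncBeta_eq_inv_beta_mul, integral_betaIntegrand_eq_beta ha hb]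
  exact inv_mul_cancel₀ (beta_pos ha hb).ne'

theorem monotoneOn_regIncBeta {a b : ℝ} (ha : 0 < a) (hb : 0 < b) :
    MonotoneOn (regIncBeta · a b) (Icc 0 1) := by
  intro z₁ hz₁ z₂ hz₂ hz
  simp only [regIncBeta_eq_inv_beta_mul]
  refine mul_le_mul_of_nonneg_left ?_ (inv_nonneg.2 (beta_pos ha hb).le)
  refine intervalIntegral.integral_mono_interval le_rfl hz₁.1 hz ?_
    ((intervalIntegrable_betaIntegrand ha hb).mono_set ?_)
  · refine (ae_restrict_iff' measurableSet_Ioc).2 (Eventually.of_forall fun t ht => ?_)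
    exact mul_nonneg (rpow_nonneg ht.1.le _) (rpow_nonneg (sub_nonneg.2 (ht.2.trans hz₂.2)) _)
  · rw [uIcc_of_le hz₂.1, uIcc_of_le zero_le_one]
    exact Icc_subset_Icc le_rfl hz₂.2

theorem continuousOn_regIncBeta {a b : ℝ} (ha : 0 < a) (hb : 0 < b) :
    ContinuousOn (regIncBeta · a b) (Icc 0 1) := by
  simp only [regIncBeta_eq_inv_beta_mul]
  refine continuousOn_const.mul ?_
  simpa [uIcc_of_le zero_le_one] using intervalIntegral.continuousOn_primitive_interval'
    (intervalIntegrable_betaIntegrand ha hb) left_mem_uIcc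

theorem mapsTo_regIncBeta {a b : ℝ} (ha : 0 < a) (hb : 0 < b) :
    MapsTo (regIncBeta · a b) (Icc 0 1) (Icc 0 1) := fun _ hz =>
  ⟨regIncBeta_zero a b ▸ monotoneOn_regIncBeta ha hb (left_mem_Icc.2 zero_le_one) hz hz.1,
    regIncBeta_one ha hb ▸ monotoneOn_regIncBeta ha hb hz (right_mem_Icc.2 zero_le_one) hz.2⟩

section Mixture

variable {ι α : Type*} {w : ι → ℝ} {f : ι → α → ℝ}

theorem summable_mul_of_mem_Icc (hw0 : ∀ j, 0 ≤ w j) (hw : Summable w) {v : ι → ℝ}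
    (hv : ∀ j, v j ∈ Icc (-1) 1) : Summable fun j => w j * v j :=
  hw.of_norm_bounded fun j => by
    rw [norm_mul, norm_of_nonneg (hw0 j)]
    exact mul_le_of_le_one_right (hw0 j) (abs_le.2 (hv j))

theorem monotoneOn_tsum_mul [Preorder α] {s : Set α} (hw0 : ∀ j, 0 ≤ w j) (hw : Summable w)
    (hf : ∀ j, MonotoneOn (f j) s) (hf1 : ∀ j, MapsTo (f j) s (Icc (-1) 1)) :
    MonotoneOn (fun x => ∑' j, w j * f j x) s := fun _ hx _ hy hxy =>
  (summable_mul_of_mem_Icc hw0 hw fun j => hf1 j hx).tsum_le_tsum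
    (fun j => mul_le_mul_of_nonneg_left (hf j hx hy hxy) (hw0 j))
    (summable_mul_of_mem_Icc hw0 hw fun j => hf1 j hy)

theorem tendsto_tsum_mul {l : Filter α} {c : ι → ℝ} (hw0 : ∀ j, 0 ≤ w j) (hw : Summable w)
    (hf : ∀ j, Tendsto (f j) l (𝓝 (c j))) (hf1 : ∀ᶠ x in l, ∀ j, f j x ∈ Icc (-1) 1) :
    Tendsto (fun x => ∑' j, w j * f j x) l (𝓝 (∑' j, w j * c j)) :=
  tendsto_tsum_of_dominated_convergence hw (fun j => (hf j).const_mul (w j)) <|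
    hf1.mono fun x hx j => by
      rw [norm_mul, norm_of_nonneg (hw0 j)]
      exact mul_le_of_le_one_right (hw0 j) (abs_le.2 (hx j))

end Mixture

section Ratio

variable {p r : ℝ}

theorem mapsTo_mul_div_add_mul (hp : 0 < p) (hr : 0 ≤ r) :
    MapsTo (fun x => p * x / (r + p * x)) (Ioi 0) (Icc 0 1) := fun x (hx : 0 < x) =>
  have hpx : 0 < p * x := mul_pos hp hx
  ⟨by positivity, div_le_one_of_le₀ (le_add_of_nonneg_left hr) (by positivity)⟩

theorem monotoneOn_mul_div_add_mul (hp : 0 < p) (hr : 0 ≤ r) :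
    MonotoneOn (fun x => p * x / (r + p * x)) (Ioi 0) := by
  intro x hx y hy hxy
  rw [mem_Ioi] at hx hy
  rw [div_le_div_iff₀ (by positivity) (by positivity)]
  nlinarith [mul_le_mul_of_nonneg_left hxy (mul_nonneg hp.le hr)]

theorem tendsto_mul_div_add_mul (hp : 0 < p) :
    Tendsto (fun x => p * x / (r + p * x)) atTop (𝓝 1) := by
  have h : Tendsto (fun x => r + p * x) atTop atTop :=
    tendsto_atTop_add_const_left _ r (tendsto_id.const_mul_atTop hp)
  have h' := (h.inv_tendsto_atTop.const_mul r).const_sub 1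
  rw [mul_zero, sub_zero] at h'
  refine h'.congr' ((h.eventually_gt_atTop 0).mono fun x hx => ?_)
  simp only [Pi.inv_apply]
  field_simp
  ring

variable {a b : ℝ}

theorem mapsTo_regIncBeta_mul_div_add_mul (hp : 0 < p) (hr : 0 ≤ r) (ha : 0 < a) (hb : 0 < b) :
    MapsTo (fun x => regIncBeta (p * x / (r + p * x)) a b) (Ioi 0) (Icc 0 1) :=
  (mapsTo_regIncBeta ha hb).comp (mapsTo_mul_div_add_mul hp hr)

theorem monotoneOn_regIncBeta_mul_div_add_mul (hp : 0 < p) (hr : 0 ≤ r) (ha : 0 < a)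
    (hb : 0 < b) : MonotoneOn (fun x => regIncBeta (p * x / (r + p * x)) a b) (Ioi 0) :=
  (monotoneOn_regIncBeta ha hb).comp (monotoneOn_mul_div_add_mul hp hr)
    (mapsTo_mul_div_add_mul hp hr)

theorem tendsto_regIncBeta_mul_div_add_mul (hp : 0 < p) (hr : 0 ≤ r) (ha : 0 < a) (hb : 0 < b) :
    Tendsto (fun x => regIncBeta (p * x / (r + p * x)) a b) atTop (𝓝 1) := by
  have hz : Tendsto (fun x => p * x / (r + p * x)) atTop (𝓝[Icc 0 1] 1) :=
    tendsto_nhdsWithin_iff.2 ⟨tendsto_mul_div_add_mul hp,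
      (eventually_gt_atTop 0).mono fun _ hx => mapsTo_mul_div_add_mul hp hr hx⟩
  simpa only [regIncBeta_one ha hb, Function.comp_def] using
    ((continuousOn_regIncBeta ha hb) 1 (right_mem_Icc.2 zero_le_one)).tendsto.comp hz

end Ratio

theorem ksquare_cdf_monotone_tendsto_one (p q r a2 : ℝ)
    (hp : 0 < p) (hq : 0 < q) (hr : 0 < r) (ha : 0 ≤ a2)
    (g : ℕ → ℝ)
    (hg : ∀ j : ℕ, g j =
      (if a2 = 0 then (if j = 0 then (1:ℝ) else 0) else
        (Real.Gamma (q / 2 + j) / (Real.Gamma (j + 1) * Real.Gamma (q / 2))) *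
          (q / (q + a2)) ^ (q / 2) * (a2 / (q + a2)) ^ (j : ℕ)))
    (F : ℝ → ℝ)
    (hF : ∀ x : ℝ, 0 < x →
      F x = ∑' j : ℕ, g j * regIncBeta (p * x / (r + p * x)) (p / 2 + j) (r / 2)) :
    MonotoneOn F (Set.Ioi 0) ∧ Filter.Tendsto F Filter.atTop (nhds 1) := by
  have hc : ∀ k : ℕ, q / 2 ≠ -k := fun k => by linarith [(k.cast_nonneg : (0 : ℝ) ≤ k)]
  have hqa : 0 < q + a2 := by linarith
  have hg_eq : g = negBinomialWeight (q / 2) (q / (q + a2)) :=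
    funext fun j => (hg j).trans (negBinomialWeight_div_add hc hq.ne' hqa.ne' j).symm
  have hρ1 : q / (q + a2) ≤ 1 := div_le_one_of_le₀ (le_add_of_nonneg_right ha) hqa.le
  have hw0 : ∀ j, 0 ≤ g j := hg_eq ▸ negBinomialWeight_nonneg (by positivity) (by positivity) hρ1
  have hw : HasSum g 1 := hg_eq ▸ hasSum_negBinomialWeight hc (by positivity) (by linarith)
  have hab : ∀ j : ℕ, 0 < p / 2 + j := fun j => by positivity
  have hf : ∀ j : ℕ, MapsTo (fun x => regIncBeta (p * x / (r + p * x)) (p / 2 + j) (r / 2))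
      (Ioi 0) (Icc (-1) 1) := fun j =>
    (mapsTo_regIncBeta_mul_div_add_mul hp hr.le (hab j) (half_pos hr)).mono_right
      (Icc_subset_Icc_left (by norm_num))
  refine ⟨(monotoneOn_tsum_mul hw0 hw.summable (fun j => monotoneOn_regIncBeta_mul_div_add_mul
    hp hr.le (hab j) (half_pos hr)) hf).congr fun x hx => (hF x hx).symm, ?_⟩
  have h := tendsto_tsum_mul hw0 hw.summable
    (fun j => tendsto_regIncBeta_mul_div_add_mul hp hr.le (hab j) (half_pos hr))
    ((eventually_gt_atTop 0).mono fun _ hx j => hf j hx)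
  simp only [mul_one, hw.tsum_eq] at h
  exact h.congr' ((eventually_gt_atTop 0).mono fun x hx => (hF x hx).symm)
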